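/- arXiv:0801.4425 — 4 statements merged into one kernel-verified Lean document; each statement's English description precedes it below -/
import Mathlib

section
/- For the system $u_1' = -u_2$, $u_2' = -u_2/u_1$ with $u_1(0) > 0$: the solution exists globally on $[0,\infty)$, $u_1(t) > 0$ for all $t \geq 0$, and the solution is smooth ($C^\infty$) on $[0,\infty)$. -/
open Real

section AuxODE

open intervalIntegral MeasureTheory ContDiff

/-- `u₁` as a function of the auxiliary time `τ`. -/
noncomputable def ww (a b : ℝ) (τ : ℝ) : ℝ := a * Real.exp (b * (Real.exp (-τ) - 1))

/-- Complexification of `ww`. -/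
noncomputable def wc (a b : ℝ) (z : ℂ) : ℂ := a * Complex.exp (b * (Complex.exp (-z) - 1))

/-- The physical time as a function of the auxiliary time. -/
noncomputable def TT (a b : ℝ) (τ : ℝ) : ℝ := ∫ σ in (0:ℝ)..τ, ww a b σ

/-- Complexification of `TT`. -/
noncomputable def Tc (a b : ℝ) (z : ℂ) : ℂ := z * ∫ s in (0:ℝ)..1, wc a b (s * z)

open Classical in
/-- Inverse of `TT`. -/
noncomputable def GG (a b : ℝ) (t : ℝ) : ℝ :=
  if h : ∃ τ, TT a b τ = t then h.choose else 0

variable (a b : ℝ)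

lemma ww_pos {a : ℝ} (ha : 0 < a) (b τ : ℝ) : 0 < ww a b τ :=
  mul_pos ha (Real.exp_pos _)

lemma ww_cont : Continuous (ww a b) := by
  unfold ww; fun_prop

lemma wc_cont : Continuous (wc a b) := by
  unfold wc; fun_prop

lemma wc_real (τ : ℝ) : wc a b (τ : ℂ) = ((ww a b τ : ℝ) : ℂ) := by
  unfold wc ww
  push_cast [Complex.ofReal_exp]
  ring_nf

lemma hasDerivAt_wc (z : ℂ) :
    HasDerivAt (wc a b) (-(b * Complex.exp (-z)) * wc a b z) z := by
  unfold wc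
  have h1 : HasDerivAt (fun z : ℂ => Complex.exp (-z)) (-Complex.exp (-z)) z := by
    exact ((Complex.hasDerivAt_exp (-z)).comp z ((hasDerivAt_id z).neg)).congr_deriv (by simp)
  have h2 : HasDerivAt (fun z : ℂ => (b:ℂ) * (Complex.exp (-z) - 1))
      ((b:ℂ) * (-Complex.exp (-z))) z := ((h1.sub_const 1).const_mul _)
  have h3 := (Complex.hasDerivAt_exp _).comp z h2
  have h4 := h3.const_mul (a : ℂ)
  exact h4.congr_deriv (by ring)

lemma hasDerivAt_ww (τ : ℝ) :
    HasDerivAt (ww a b) (-(b * Real.exp (-τ)) * ww a b τ) τ := by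
  unfold ww
  have h1 : HasDerivAt (fun τ : ℝ => Real.exp (-τ)) (-Real.exp (-τ)) τ := by
    exact ((Real.hasDerivAt_exp (-τ)).comp τ ((hasDerivAt_id τ).neg)).congr_deriv (by simp)
  have h2 : HasDerivAt (fun τ : ℝ => b * (Real.exp (-τ) - 1))
      (b * (-Real.exp (-τ))) τ := ((h1.sub_const 1).const_mul _)
  have h3 := (Real.hasDerivAt_exp _).comp τ h2
  have h4 := h3.const_mul a
  exact h4.congr_deriv (by ring)

lemma ww_contDiff : ContDiff ℝ ω (ww a b) := by
  unfold ww
  exact contDiff_const.mul (Real.contDiff_exp.comp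
    (contDiff_const.mul ((Real.contDiff_exp.comp contDiff_neg).sub contDiff_const)))

lemma Tc_diff : Differentiable ℂ (Tc a b) := by
  have key : ∀ z₀ : ℂ, DifferentiableAt ℂ (fun z : ℂ => ∫ s in (0:ℝ)..1, wc a b (s * z)) z₀ := by
    intro z₀
    set g : ℂ → ℂ := fun z => -(b * Complex.exp (-z)) * wc a b z with hg
    have gc : Continuous g := by
      have := wc_cont a b
      unfold g; fun_prop
    obtain ⟨C, hC⟩ := (isCompact_closedBall (0:ℂ) (‖z₀‖ + 1)).exists_bound_of_continuousOn
      gc.continuousOn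
    have main := intervalIntegral.hasDerivAt_integral_of_dominated_loc_of_deriv_le
      (F := fun (z : ℂ) (s : ℝ) => wc a b (s * z))
      (F' := fun (z : ℂ) (s : ℝ) => (s : ℂ) * g ((s:ℂ) * z))
      (μ := volume) (a := (0:ℝ)) (b := (1:ℝ)) (x₀ := z₀)
      (bound := fun _ => |C|) (s := Metric.ball z₀ 1) (Metric.ball_mem_nhds z₀ one_pos)
      (by
        filter_upwards with z
        exact ((wc_cont a b).comp (by fun_prop)).aestronglyMeasurable)
      (((wc_cont a b).comp (by fun_prop)).intervalIntegrable 0 1)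
      (by apply Continuous.aestronglyMeasurable; fun_prop)
      (by
        filter_upwards with s hs z hz
        rw [Set.uIoc_of_le (by norm_num : (0:ℝ) ≤ 1)] at hs
        have hs0 : 0 ≤ s := le_of_lt hs.1
        have hs1 : s ≤ 1 := hs.2
        have hmem : (s:ℂ) * z ∈ Metric.closedBall (0:ℂ) (‖z₀‖ + 1) := by
          simp only [Metric.mem_closedBall, dist_zero_right]
          calc ‖(s:ℂ) * z‖ = |s| * ‖z‖ := by
                rw [norm_mul, Complex.norm_real, Real.norm_eq_abs]
              _ ≤ 1 * ‖z‖ := by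
                apply mul_le_mul_of_nonneg_right _ (norm_nonneg _)
                rw [abs_of_nonneg hs0]; exact hs1
              _ ≤ ‖z₀‖ + 1 := by
                rw [one_mul]
                have := mem_ball_iff_norm.mp hz
                have := norm_le_norm_add_norm_sub' z z₀
                linarith [le_of_lt (mem_ball_iff_norm.mp hz)]
        calc ‖(s:ℂ) * g ((s:ℂ) * z)‖ ≤ 1 * ‖g ((s:ℂ)*z)‖ := by
              rw [norm_mul]
              apply mul_le_mul_of_nonneg_right _ (norm_nonneg _)
              rw [Complex.norm_real, Real.norm_eq_abs, abs_of_nonneg hs0]; exact hs1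
          _ ≤ |C| := by rw [one_mul]; exact le_trans (hC _ hmem) (le_abs_self C)
        )
      (intervalIntegrable_const)
      (by
        filter_upwards with s hs z hz
        have h0 : HasDerivAt (fun z : ℂ => (s:ℂ) * z) (s:ℂ) z := by
          simpa using (hasDerivAt_id z).const_mul (s:ℂ)
        have h1 := (hasDerivAt_wc a b ((s:ℂ)*z)).comp z h0
        have h2 : HasDerivAt (fun z : ℂ => wc a b ((s:ℂ) * z))
            (-(↑b * Complex.exp (-(↑s * z))) * wc a b (↑s * z) * ↑s) z := h1
        exact h2.congr_deriv (by unfold g; ring))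
    exact main.2.differentiableAt
  intro z
  exact (differentiableAt_id.mul (key z))

lemma Tc_real (τ : ℝ) : Tc a b (τ : ℂ) = ((TT a b τ : ℝ) : ℂ) := by
  unfold Tc TT
  have h1 : ∀ s : ℝ, wc a b ((s:ℂ) * (τ:ℂ)) = ((ww a b (s * τ) : ℝ) : ℂ) := by
    intro s; rw [← Complex.ofReal_mul, wc_real]
  rw [intervalIntegral.integral_congr (g := fun s : ℝ => ((ww a b (s * τ) : ℝ) : ℂ))
    (fun s _ => h1 s)]
  rw [intervalIntegral.integral_ofReal]
  rw [← Complex.ofReal_mul]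
  congr 1
  have := intervalIntegral.smul_integral_comp_mul_right (a := (0:ℝ)) (b := (1:ℝ))
    (f := ww a b) (c := τ)
  simp only [smul_eq_mul, zero_mul, one_mul] at this
  linarith [this]

lemma hasDerivAt_TT (τ : ℝ) : HasDerivAt (TT a b) (ww a b τ) τ := by
  unfold TT
  exact intervalIntegral.integral_hasDerivAt_right
    ((ww_cont a b).intervalIntegrable 0 τ)
    ((ww_cont a b).stronglyMeasurableAtFilter _ _)
    (ww_cont a b).continuousAt

lemma TT_analyticAt (τ : ℝ) : AnalyticAt ℝ (TT a b) τ := by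
  have heq : TT a b = fun τ : ℝ => Complex.reCLM (Tc a b (Complex.ofRealCLM τ)) := by
    funext σ
    simp [Tc_real a b σ]
  rw [heq]
  have h1 : AnalyticAt ℝ (Tc a b) ((τ:ℂ)) := ((Tc_diff a b).analyticAt _).restrictScalars
  have h2 : AnalyticAt ℝ (fun τ : ℝ => (τ:ℂ)) τ := Complex.ofRealCLM.analyticAt τ
  have h3 : AnalyticAt ℝ (fun τ : ℝ => Tc a b ((τ:ℂ))) τ := h1.comp h2
  exact (Complex.reCLM.analyticAt _).comp h3

lemma TT_zero : TT a b 0 = 0 := by simp [TT]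

variable {a}

lemma TT_mono (ha : 0 < a) : StrictMono (TT a b) := by
  apply strictMono_of_deriv_pos
  intro τ
  rw [(hasDerivAt_TT a b τ).deriv]
  exact ww_pos ha b τ

lemma TT_surj_Ici (ha : 0 < a) {t : ℝ} (ht : 0 ≤ t) : ∃ τ, TT a b τ = t := by
  set c := a * Real.exp (-|b|) with hc
  have hcpos : 0 < c := mul_pos ha (Real.exp_pos _)
  have hlow : ∀ σ : ℝ, 0 ≤ σ → c ≤ ww a b σ := by
    intro σ hσ
    unfold ww
    apply mul_le_mul_of_nonneg_left _ ha.le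
    apply Real.exp_le_exp.2
    have h1 : Real.exp (-σ) ≤ 1 := Real.exp_le_one_iff.2 (by linarith)
    have h2 : 0 < Real.exp (-σ) := Real.exp_pos _
    have : |b * (Real.exp (-σ) - 1)| ≤ |b| := by
      rw [abs_mul]
      have : |Real.exp (-σ) - 1| ≤ 1 := by rw [abs_le]; constructor <;> linarith
      calc |b| * |Real.exp (-σ) - 1| ≤ |b| * 1 :=
            mul_le_mul_of_nonneg_left this (abs_nonneg b)
        _ = |b| := mul_one _
    linarith [neg_abs_le (b * (Real.exp (-σ) - 1)), abs_le.mp this]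
  set R := t / c + 1 with hR
  have hRpos : 0 ≤ R := by positivity
  have hTR : t ≤ TT a b R := by
    have : c * R ≤ TT a b R := by
      have : ∫ σ in (0:ℝ)..R, c ≤ ∫ σ in (0:ℝ)..R, ww a b σ := by
        apply intervalIntegral.integral_mono_on hRpos
          (intervalIntegrable_const) ((ww_cont a b).intervalIntegrable 0 R)
        intro σ hσ; exact hlow σ hσ.1
      rw [intervalIntegral.integral_const, smul_eq_mul, sub_zero] at this
      unfold TT
      linarith
    have h2 : c * R = t + c := by rw [hR, mul_add, mul_one, mul_div_cancel₀ _ hcpos.ne']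
    rw [h2] at this
    linarith
  have hcont : Continuous (TT a b) :=
    continuous_iff_continuousAt.2 fun τ => (hasDerivAt_TT a b τ).continuousAt
  have hmem : t ∈ Set.Icc (TT a b 0) (TT a b R) := by
    rw [TT_zero]; exact ⟨ht, hTR⟩
  obtain ⟨τ, -, hτ⟩ := intermediate_value_Icc hRpos hcont.continuousOn hmem
  exact ⟨τ, hτ⟩

lemma GG_props (ha : 0 < a) (τ₀ : ℝ) :
    GG a b (TT a b τ₀) = τ₀ ∧
    HasDerivAt (GG a b) (ww a b τ₀)⁻¹ (TT a b τ₀) ∧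
    ContDiffAt ℝ ω (GG a b) (TT a b τ₀) := by
  have hinj := (TT_mono b ha).injective
  have hf : ContDiffAt ℝ ω (TT a b) τ₀ := (TT_analyticAt a b τ₀).contDiffAt
  have hf' : HasFDerivAt (TT a b)
      (↑(ContinuousLinearEquiv.unitsEquivAut ℝ (Units.mk0 _ (ww_pos ha b τ₀).ne')) :
        ℝ →L[ℝ] ℝ) τ₀ :=
    (hasDerivAt_TT a b τ₀).hasFDerivAt_equiv (ww_pos ha b τ₀).ne'
  have hn : (ω : WithTop ℕ∞) ≠ 0 := by simp
  set linv := hf.localInverse hf' hn with hlinv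
  have hlinv_cd : ContDiffAt ℝ ω linv (TT a b τ₀) := hf.to_localInverse hf' hn
  have hri : ∀ᶠ y in nhds (TT a b τ₀), TT a b (linv y) = y :=
    (hf.hasStrictFDerivAt' hf' hn).eventually_right_inverse
  have heq : GG a b =ᶠ[nhds (TT a b τ₀)] linv := by
    filter_upwards [hri] with y hy
    have hex : ∃ τ, TT a b τ = y := ⟨linv y, hy⟩
    have h1 : TT a b (GG a b y) = y := by
      unfold GG; rw [dif_pos hex]; exact hex.choose_spec
    exact hinj (h1.trans hy.symm)
  have hG0 : GG a b (TT a b τ₀) = τ₀ := by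
    have h1 : TT a b (GG a b (TT a b τ₀)) = TT a b τ₀ := by
      have hex : ∃ τ, TT a b τ = TT a b τ₀ := ⟨τ₀, rfl⟩
      unfold GG; rw [dif_pos hex]; exact hex.choose_spec
    exact hinj h1
  have hGri : ∀ᶠ y in nhds (TT a b τ₀), TT a b (GG a b y) = y := by
    filter_upwards [hri, heq] with y hy h'y
    rw [h'y]; exact hy
  have hGcont : ContinuousAt (GG a b) (TT a b τ₀) :=
    hlinv_cd.continuousAt.congr heq.symm
  refine ⟨hG0, ?_, hlinv_cd.congr_of_eventuallyEq heq⟩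
  have := HasDerivAt.of_local_left_inverse hGcont
    (f := TT a b) (f' := ww a b τ₀) (hG0.symm ▸ hasDerivAt_TT a b τ₀)
    (ww_pos ha b τ₀).ne' hGri
  exact this

end AuxODE

/-- for the singular system `u₁' = -u₂`, `u₂' = -u₂/u₁` with
`u₁(0) > 0`, there is a global solution on `[0,∞)` with `u₁ > 0` everywhere,
and the solution is `C^∞` on `[0,∞)`. -/
theorem example_ok_global_smooth_solution
    (a b : ℝ) (ha : 0 < a) :
    ∃ u₁ u₂ : ℝ → ℝ,
      u₁ 0 = a ∧ u₂ 0 = b ∧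
      (∀ t ∈ Set.Ici (0:ℝ), 0 < u₁ t) ∧
      (∀ t ∈ Set.Ici (0:ℝ), HasDerivAt u₁ (-(u₂ t)) t) ∧
      (∀ t ∈ Set.Ici (0:ℝ), HasDerivAt u₂ (-(u₂ t) / u₁ t) t) ∧
      ContDiffOn ℝ (⊤ : ℕ∞) u₁ (Set.Ici (0:ℝ)) ∧
      ContDiffOn ℝ (⊤ : ℕ∞) u₂ (Set.Ici (0:ℝ)) := by
  refine ⟨fun t => ww a b (GG a b t), fun t => b * Real.exp (-(GG a b t)),
    ?_, ?_, ?_, ?_, ?_, ?_, ?_⟩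
  · -- u₁ 0 = a
    have h0 : GG a b 0 = 0 := by
      have := (GG_props b ha 0).1
      rwa [TT_zero] at this
    show ww a b (GG a b 0) = a
    rw [h0]; simp [ww]
  · have h0 : GG a b 0 = 0 := by
      have := (GG_props b ha 0).1
      rwa [TT_zero] at this
    show b * Real.exp (-(GG a b 0)) = b
    rw [h0]; simp
  · intro t _; exact ww_pos ha b _
  · -- u₁' = -u₂
    intro t ht
    obtain ⟨τ₀, rfl⟩ := TT_surj_Ici b ha ht
    obtain ⟨hG0, hGd, -⟩ := GG_props b ha τ₀
    have h1 := (hasDerivAt_ww a b (GG a b (TT a b τ₀))).comp _ hGd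
    rw [hG0] at h1
    have hne := (ww_pos ha b τ₀).ne'
    show HasDerivAt (fun t => ww a b (GG a b t)) (-(b * Real.exp (-(GG a b (TT a b τ₀))))) _
    rw [hG0]
    exact h1.congr_deriv (by field_simp)
  · -- u₂' = -u₂/u₁
    intro t ht
    obtain ⟨τ₀, rfl⟩ := TT_surj_Ici b ha ht
    obtain ⟨hG0, hGd, -⟩ := GG_props b ha τ₀
    have h1 : HasDerivAt (fun t => Real.exp (-(GG a b t)))
        (Real.exp (-(GG a b (TT a b τ₀))) * (-(ww a b τ₀)⁻¹)) (TT a b τ₀) :=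
      (Real.hasDerivAt_exp _).comp _ hGd.neg
    have h2 := h1.const_mul b
    rw [hG0] at h2
    have hne := (ww_pos ha b τ₀).ne'
    show HasDerivAt (fun t => b * Real.exp (-(GG a b t)))
      (-(b * Real.exp (-(GG a b (TT a b τ₀)))) / ww a b (GG a b (TT a b τ₀))) _
    rw [hG0]
    exact h2.congr_deriv (by rw [div_eq_mul_inv]; ring)
  · -- smoothness of u₁
    intro t ht
    obtain ⟨τ₀, rfl⟩ := TT_surj_Ici b ha ht
    obtain ⟨-, -, hGs⟩ := GG_props b ha τ₀
    exact ((ww_contDiff a b).contDiffAt.comp _ hGs).contDiffWithinAt.of_le le_top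
  · -- smoothness of u₂
    intro t ht
    obtain ⟨τ₀, rfl⟩ := TT_surj_Ici b ha ht
    obtain ⟨-, -, hGs⟩ := GG_props b ha τ₀
    have : ContDiffAt ℝ (⊤ : WithTop ℕ∞) (fun t => b * Real.exp (-(GG a b t))) (TT a b τ₀) :=
      contDiffAt_const.mul (Real.contDiff_exp.contDiffAt.comp _ hGs.neg)
    exact this.contDiffWithinAt.of_le le_top
end

section
/- In the setting of the previous example ($u_1' = -u_3$, $u_2' = -u_2/u_1$, $u_3' = -u_3$, $u_1(0)>0$, $u_3(0) = Au_1(0)$ with $A>1$): if $(A-1)u_1(0) > 1$ and $u_2(0) \neq 0$, then the derivative $u_2'(t)$ blows up as $t \to t^{*-}$, where $t^* = \ln(A/(A-1))$ is the time at which $u_1$ attains $0$; i.e., $|u_2'(t)| \to +\infty$ as $t \to t^{*-}$. -/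
/-!
With `c = (A - 1) u₁(0) > 1`, the equations give `u₃ = u₃(0) e^{-t}` and `u₃ - u₁ ≡ c`, so
`u₁ = u₃(0) e^{-t} - c` decreases to `0` at `t*`. Since `(log u₁ + t) / c` is an antiderivative of
`-1 / u₁`, `u₂ = u₂(0) (u₁ / u₁(0))^{1/c} e^{t/c}`, hence `|u₂'| = |u₂| / u₁` is a positive
continuous factor times `u₁^{1/c - 1}`, which blows up as `u₁ → 0⁺` because `1/c < 1`.
-/

open Real Filter Set Topology

theorem eq_of_hasDerivAt_zero_Ico {f : ℝ → ℝ} {a b : ℝ}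
    (hf : ∀ x ∈ Ico a b, HasDerivAt f 0 x) : ∀ t ∈ Ico a b, f t = f a := by
  intro t ht
  have hsub : Icc a t ⊆ Ico a b := Icc_subset_Ico_right ht.2
  exact constant_of_has_deriv_right_zero
    (fun x hx => (hf x (hsub hx)).continuousAt.continuousWithinAt)
    (fun x hx => (hf x (hsub (Ico_subset_Icc_self hx))).hasDerivWithinAt) t ⟨ht.1, le_rfl⟩

theorem eq_mul_exp_sub_of_hasDerivAt_Ico {f g g' : ℝ → ℝ} {a b : ℝ}
    (hg : ∀ x ∈ Ico a b, HasDerivAt g (g' x) x)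
    (hf : ∀ x ∈ Ico a b, HasDerivAt f (g' x * f x) x) :
    ∀ t ∈ Ico a b, f t = f a * exp (g t - g a) := by
  have hconst := eq_of_hasDerivAt_zero_Ico (f := fun x => f x * exp (-g x)) fun x hx =>
    ((hf x hx).mul (hg x hx).neg.exp).congr_deriv (by ring)
  intro t ht
  calc f t = f t * exp (-g t) * exp (g t) := by
        rw [mul_assoc, ← exp_add, neg_add_cancel, exp_zero, mul_one]
    _ = f a * exp (-g a) * exp (g t) := by rw [hconst t ht]
    _ = f a * exp (g t - g a) := by rw [mul_assoc, ← exp_add, neg_add_eq_sub]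

/-- When `u₁' = -(u₁ + c)`, an antiderivative of `-1 / u₁` is `(log u₁ + t) / c`. -/
theorem eq_mul_div_rpow_mul_exp_of_hasDerivAt {u₁ u₂ : ℝ → ℝ} {a b c : ℝ} (hc : c ≠ 0)
    (hpos : ∀ t ∈ Ico a b, 0 < u₁ t)
    (h₁ : ∀ t ∈ Ico a b, HasDerivAt u₁ (-(u₁ t + c)) t)
    (h₂ : ∀ t ∈ Ico a b, HasDerivAt u₂ (-(u₂ t) / u₁ t) t) :
    ∀ t ∈ Ico a b, u₂ t = u₂ a * (u₁ t / u₁ a) ^ c⁻¹ * exp ((t - a) / c) := by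
  have hsol := eq_mul_exp_sub_of_hasDerivAt_Ico (g := fun t => (log (u₁ t) + t) / c)
    (g' := fun t => -(u₁ t)⁻¹)
    (fun t ht => ((((h₁ t ht).log (hpos t ht).ne').add (hasDerivAt_id t)).div_const c).congr_deriv
      (by field_simp [(hpos t ht).ne']; ring))
    (fun t ht => (h₂ t ht).congr_deriv (by ring))
  intro t ht
  have ha : 0 < u₁ a := hpos a ⟨le_rfl, ht.1.trans_lt ht.2⟩
  rw [hsol t ht, rpow_def_of_pos (div_pos (hpos t ht) ha), log_div (hpos t ht).ne' ha.ne',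
    mul_assoc, ← exp_add]
  congr 2
  field_simp
  ring

theorem tendsto_rpow_div_self_nhdsGT_zero {p : ℝ} (hp : p < 1) :
    Tendsto (fun x : ℝ => x ^ p / x) (𝓝[>] 0) atTop := by
  refine (tendsto_rpow_neg_nhdsGT_zero (sub_neg.mpr hp)).congr' ?_
  filter_upwards [self_mem_nhdsWithin] with x hx
  rw [rpow_sub hx, rpow_one]

theorem abs_deriv_eq_of_hasDerivAt {u₁ u₂ : ℝ → ℝ} {a b c : ℝ} (hc : c ≠ 0)
    (hpos : ∀ t ∈ Ico a b, 0 < u₁ t)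
    (h₁ : ∀ t ∈ Ico a b, HasDerivAt u₁ (-(u₁ t + c)) t)
    (h₂ : ∀ t ∈ Ico a b, HasDerivAt u₂ (-(u₂ t) / u₁ t) t) :
    ∀ t ∈ Ico a b,
      |deriv u₂ t| = |u₂ a| / u₁ a ^ c⁻¹ * exp ((t - a) / c) * (u₁ t ^ c⁻¹ / u₁ t) := by
  intro t ht
  have ha : 0 < u₁ a := hpos a ⟨le_rfl, ht.1.trans_lt ht.2⟩
  rw [(h₂ t ht).deriv, abs_div, abs_neg, abs_of_pos (hpos t ht),
    eq_mul_div_rpow_mul_exp_of_hasDerivAt hc hpos h₁ h₂ t ht, abs_mul, abs_mul,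
    abs_of_pos (exp_pos _), abs_of_nonneg (rpow_nonneg (div_pos (hpos t ht) ha).le _),
    div_rpow (hpos t ht).le ha.le]
  ring

theorem tendsto_nhdsGT_of_eqOn_Ico {f g : ℝ → ℝ} {a b : ℝ} (hab : a < b)
    (hfg : EqOn f g (Ico a b)) (hg : ContinuousAt g b) (hlt : ∀ t ∈ Ico a b, g b < f t) :
    Tendsto f (𝓝[<] b) (𝓝[>] g b) :=
  tendsto_nhdsWithin_iff.mpr ⟨(hg.tendsto.mono_left nhdsWithin_le_nhds).congr'
    (eventuallyEq_of_mem (Ico_mem_nhdsLT hab) hfg).symm, mem_of_superset (Ico_mem_nhdsLT hab) hlt⟩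

/-- in the setting of Example (2.19), if `(A-1)u₁(0) > 1` and
`u₂(0) ≠ 0`, then the derivative of `u₂` blows up as `t → t*⁻`, where
`t* = ln(A/(A-1))` is the time at which `u₁` reaches `0`. -/
theorem example_slow_blow_up
    (u₁ u₂ u₃ : ℝ → ℝ) (A : ℝ) (hA : 1 < A)
    (h10 : 0 < u₁ 0) (h30 : u₃ 0 = A * u₁ 0)
    (h20 : u₂ 0 ≠ 0) (hexp : 1 < (A - 1) * u₁ 0)
    (tstar : ℝ) (htstar : tstar = Real.log (A / (A - 1)))
    (hpos : ∀ t ∈ Set.Ico (0:ℝ) tstar, 0 < u₁ t)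
    (hode₁ : ∀ t ∈ Set.Ico (0:ℝ) tstar, HasDerivAt u₁ (-(u₃ t)) t)
    (hode₂ : ∀ t ∈ Set.Ico (0:ℝ) tstar, HasDerivAt u₂ (-(u₂ t) / u₁ t) t)
    (hode₃ : ∀ t ∈ Set.Ico (0:ℝ) tstar, HasDerivAt u₃ (-(u₃ t)) t) :
    Tendsto (fun t => |deriv u₂ t|) (nhdsWithin tstar (Set.Iio tstar)) atTop := by
  set c := (A - 1) * u₁ 0
  have hc : c = u₃ 0 - u₁ 0 := by rw [h30]; ring
  have htstar_pos : 0 < tstar :=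
    htstar ▸ log_pos ((one_lt_div (sub_pos.mpr hA)).mpr (by linarith))
  have hu₃ : ∀ t ∈ Ico 0 tstar, u₃ t = u₃ 0 * exp (-t) := by
    simpa using eq_mul_exp_sub_of_hasDerivAt_Ico (fun x _ => hasDerivAt_neg x)
      fun x hx => (hode₃ x hx).congr_deriv (by ring)
  have hu₃₁ : ∀ t ∈ Ico 0 tstar, u₃ t = u₁ t + c := fun t ht => by
    linarith [eq_of_hasDerivAt_zero_Ico (f := fun t => u₃ t - u₁ t)
      (fun x hx => ((hode₃ x hx).sub (hode₁ x hx)).congr_deriv (by ring)) t ht]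
  have hu₁_tstar : u₃ 0 * exp (-tstar) - c = 0 := by
    rw [htstar, exp_neg, exp_log (by positivity), h30]
    field_simp
    ring
  have hu₁_lim : Tendsto u₁ (𝓝[<] tstar) (𝓝[>] 0) := by
    have := tendsto_nhdsGT_of_eqOn_Ico (f := u₁) (g := fun t => u₃ 0 * exp (-t) - c) htstar_pos
      (fun t ht => by linarith [hu₃ t ht, hu₃₁ t ht]) (by fun_prop)
      (fun t ht => by simpa only [hu₁_tstar] using hpos t ht)
    rwa [hu₁_tstar] at this
  have hK := ((by fun_prop : Continuous fun t => |u₂ 0| / u₁ 0 ^ c⁻¹ * exp ((t - 0) / c)).tendsto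
    tstar).mono_left (nhdsWithin_le_nhds (s := Iio tstar))
  have hblow := (tendsto_rpow_div_self_nhdsGT_zero ((inv_lt_one₀ (by positivity)).mpr hexp)).comp
    hu₁_lim
  exact (hK.pos_mul_atTop (by positivity) hblow).congr' (eventuallyEq_of_mem (Ico_mem_nhdsLT
    htstar_pos) (abs_deriv_eq_of_hasDerivAt (by positivity) hpos (fun t ht => hu₃₁ t ht ▸ hode₁ t ht)
      hode₂)).symm
end

section
/- Let $X$ be a closed subset with nonempty interior of a Banach space $\tilde X$, $Y$ an open subset of a Banach space $\tilde Y$, and $T : X \times Y \to X$ with $\|T(x_1,y)-T(x_2,y)\| \leq k\|x_1-x_2\|$ for a fixed $k<1$ and all $y$. Denote by $x(y)$ the fixed point of $T(\cdot,y)$, and assume: $x(y)$ lies in the interior of $X$ for every $y$; $x(y)$ is Lipschitz continuous in $y$; $T$ is Fréchet differentiable in $y$ at a point $(\bar x, \bar y)$ with $\bar x = x(\bar y)$; and the partial Fréchet derivative $T_x(x,y)$ exists and is continuous in a neighbourhood of $(\bar x, \bar y)$. Then $x(\cdot)$ is Fréchet differentiable at $\bar y$ with derivative $[I - T_x(x(\bar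 y), \bar y)]^{-1} \circ T_y(x(\bar y), \bar y)$. -/
/-!
Write `x̄ = x ȳ` and `A = T_x(x̄, ȳ)`. Since `T(·, ȳ)` is a `k`-contraction near `x̄`, `‖A‖ ≤ k < 1`,
so `I - A` is invertible. Because `T_x` is jointly continuous, the mean value inequality makes
`T(u, y) - T(v, y) - A (u - v) = o(u - v)` uniformly for `y` near `ȳ`. Inserting `u = x y`,
`v = x̄` and using that `x` is Lipschitz, the fixed point identity gives
`(I - A)(x y - x̄) = T_y (y - ȳ) + o(y - ȳ)`.
-/

open Filter Asymptotics Metric Topology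

section

variable {𝕜 : Type*} [RCLike 𝕜]
  {E G : Type*} [NormedAddCommGroup E] [NormedSpace 𝕜 E] [NormedAddCommGroup G] [NormedSpace 𝕜 G]

/-- Strict differentiability in the first variable, uniformly in the parameter: a parametric
version of `hasStrictFDerivAt_of_hasFDerivAt_of_continuousAt`. -/
theorem isLittleO_sub_sub_of_continuousAt_partialFDeriv {P : Type*} [TopologicalSpace P]
    {f : E → P → G} {f' : E → P → E →L[𝕜] G} {a : E} {b : P}
    (hder : ∀ᶠ p in 𝓝 (a, b), HasFDerivAt (f · p.2) (f' p.1 p.2) p.1)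
    (hcont : ContinuousAt (fun p : E × P => f' p.1 p.2) (a, b)) :
    (fun p : (E × E) × P => f p.1.1 p.2 - f p.1.2 p.2 - f' a b (p.1.1 - p.1.2))
      =o[𝓝 ((a, a), b)] fun p => p.1.1 - p.1.2 := by
  rw [isLittleO_iff]
  intro c hc
  obtain ⟨U, hU, W, hW, hUW⟩ :=
    mem_nhds_prod_iff.1 (inter_mem hder (hcont <| ball_mem_nhds _ hc))
  obtain ⟨ε, ε0, hε⟩ := Metric.mem_nhds_iff.1 hU
  filter_upwards [prod_mem_nhds (prod_mem_nhds (ball_mem_nhds a ε0) (ball_mem_nhds a ε0)) hW]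
    with ⟨⟨u, v⟩, y⟩ ⟨⟨hu, hv⟩, hy⟩
  have hUW' : ∀ w ∈ ball a ε, (w, y) ∈ _ := fun w hw => hUW ⟨hε hw, hy⟩
  have hf' : ∀ w ∈ ball a ε, ‖f' w y - f' a b‖ ≤ c := fun w hw => by
    rw [← dist_eq_norm]
    exact (hUW' w hw).2.le
  let : NormedSpace ℝ E := .restrictScalars ℝ 𝕜 E
  exact (convex_ball a ε).norm_image_sub_le_of_norm_hasFDerivWithin_le' (f := (f · y))
    (fun w hw => (hUW' w hw).1.hasFDerivWithinAt) hf' hv hu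

variable {F : Type*} [NormedAddCommGroup F] [NormedSpace 𝕜 F]

theorem hasFDerivAt_comp_sub_of_isLittleO {f : E → F → G} {A : E →L[𝕜] G} {B : F →L[𝕜] G}
    {g : F → E} {b : F}
    (hf : (fun p : (E × E) × F => f p.1.1 p.2 - f p.1.2 p.2 - A (p.1.1 - p.1.2))
      =o[𝓝 ((g b, g b), b)] fun p => p.1.1 - p.1.2)
    (hfb : HasFDerivAt (f (g b)) B b) (hg : (fun y => g y - g b) =O[𝓝 b] fun y => y - b) :
    HasFDerivAt (fun y => f (g y) y - A (g y)) B b := by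
  have hg_tendsto : Tendsto g (𝓝 b) (𝓝 (g b)) :=
    tendsto_sub_nhds_zero_iff.1 (hg.trans_tendsto (tendsto_sub_nhds_zero_iff.2 tendsto_id))
  have hfg := (hf.comp_tendsto
    ((hg_tendsto.prodMk_nhds tendsto_const_nhds).prodMk_nhds tendsto_id)).trans_isBigO hg
  refine HasFDerivAt.of_isLittleO ((hfg.add hfb.isLittleO).congr_left fun y => ?_)
  simp only [Function.comp_apply, id, map_sub]
  abel

end

theorem LipschitzOnWith.isBigO_sub {E F : Type*} [SeminormedAddCommGroup E]
    [SeminormedAddCommGroup F] {K : NNReal} {f : E → F} {s : Set E} {a : E}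
    (hf : LipschitzOnWith K f s) (hs : s ∈ 𝓝 a) :
    (fun y => f y - f a) =O[𝓝 a] fun y => y - a := by
  refine IsBigO.of_bound K ?_
  filter_upwards [hs] with y hy
  rw [← dist_eq_norm, ← dist_eq_norm]
  exact hf.dist_le_mul y hy a (mem_of_mem_nhds hs)

theorem fixed_point_frechet_differentiable_general
    {E F : Type*} [NormedAddCommGroup E] [NormedSpace ℝ E] [CompleteSpace E]
    [NormedAddCommGroup F] [NormedSpace ℝ F]
    (X : Set E) (Y : Set F)
    (hY : IsOpen Y)
    (T : E → F → E) (k : ℝ) (hk : k < 1)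
    (hcontr : ∀ y ∈ Y, ∀ x₁ ∈ X, ∀ x₂ ∈ X, ‖T x₁ y - T x₂ y‖ ≤ k * ‖x₁ - x₂‖)
    (x : F → E)
    (hxint : ∀ y ∈ Y, x y ∈ interior X)
    (hfix : ∀ y ∈ Y, T (x y) y = x y)
    (K : NNReal) (hLip : LipschitzOnWith K x Y)
    (ybar : F) (hybar : ybar ∈ Y)
    (Tx : E → F → (E →L[ℝ] E)) (V : Set (E × F)) (hV : IsOpen V)
    (hVmem : (x ybar, ybar) ∈ V)
    (hTx : ∀ p ∈ V, HasFDerivAt (fun u => T u p.2) (Tx p.1 p.2) p.1)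
    (hTxcont : ContinuousOn (fun p : E × F => Tx p.1 p.2) V)
    (Ty : F →L[ℝ] E)
    (hTy : HasFDerivAt (fun v => T (x ybar) v) Ty ybar) :
    ∃ D : F →L[ℝ] E,
      (ContinuousLinearMap.id ℝ E - Tx (x ybar) ybar).comp D = Ty ∧
      HasFDerivAt x D ybar := by
  set A := Tx (x ybar) ybar
  have hA : ‖A‖ < 1 := by
    have hx := hxint ybar hybar
    refine ((hTx _ hVmem).le_of_lip' (le_max_right k 0) ?_).trans_lt (max_lt hk one_pos)
    filter_upwards [mem_interior_iff_mem_nhds.1 hx] with u hu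
    exact (hcontr ybar hybar u hu _ (interior_subset hx)).trans
      (by gcongr; exact le_max_left k 0)
  let L := ContinuousLinearEquiv.unitsEquiv ℝ E (Units.oneSub A hA)
  refine ⟨(L.symm : E →L[ℝ] E).comp Ty, ?_, ?_⟩
  · rw [← ContinuousLinearMap.comp_assoc]
    exact (congrArg (·.comp Ty) L.coe_comp_coe_symm).trans (ContinuousLinearMap.id_comp Ty)
  rw [← L.comp_hasFDerivAt_iff']
  have hLx : L ∘ x =ᶠ[𝓝 ybar] fun y => T (x y) y - A (x y) := by
    filter_upwards [hY.mem_nhds hybar] with y hy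
    simp [L, hfix y hy]
  refine HasFDerivAt.congr_of_eventuallyEq ?_ hLx
  exact hasFDerivAt_comp_sub_of_isLittleO
    (isLittleO_sub_sub_of_continuousAt_partialFDeriv (eventually_of_mem (hV.mem_nhds hVmem) hTx)
      (hTxcont.continuousAt (hV.mem_nhds hVmem)))
    hTy (hLip.isBigO_sub (hY.mem_nhds hybar))

/-- Lemma 3.1: Fréchet differentiability of the fixed point of a
family of contractions with respect to the parameter; the derivative `D`
satisfies `(I - T_x) ∘ D = T_y`, i.e. `D = [I - T_x]⁻¹ ∘ T_y`. -/
theorem fixed_point_frechet_differentiable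
    {E F : Type*} [NormedAddCommGroup E] [NormedSpace ℝ E] [CompleteSpace E]
    [NormedAddCommGroup F] [NormedSpace ℝ F]
    (X : Set E) (Y : Set F) (hX : IsClosed X) (hXint : (interior X).Nonempty)
    (hY : IsOpen Y)
    (T : E → F → E) (k : ℝ) (hk : k < 1)
    (hmaps : ∀ x ∈ X, ∀ y ∈ Y, T x y ∈ X)
    (hcontr : ∀ y ∈ Y, ∀ x₁ ∈ X, ∀ x₂ ∈ X, ‖T x₁ y - T x₂ y‖ ≤ k * ‖x₁ - x₂‖)
    (x : F → E)
    (hxint : ∀ y ∈ Y, x y ∈ interior X)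
    (hfix : ∀ y ∈ Y, T (x y) y = x y)
    (K : NNReal) (hLip : LipschitzOnWith K x Y)
    (ybar : F) (hybar : ybar ∈ Y)
    (Tx : E → F → (E →L[ℝ] E)) (V : Set (E × F)) (hV : IsOpen V)
    (hVmem : (x ybar, ybar) ∈ V)
    (hTx : ∀ p ∈ V, HasFDerivAt (fun u => T u p.2) (Tx p.1 p.2) p.1)
    (hTxcont : ContinuousOn (fun p : E × F => Tx p.1 p.2) V)
    (Ty : F →L[ℝ] E)
    (hTy : HasFDerivAt (fun v => T (x ybar) v) Ty ybar) :
    ∃ D : F →L[ℝ] E,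
      (ContinuousLinearMap.id ℝ E - Tx (x ybar) ybar).comp D = Ty ∧
      HasFDerivAt x D ybar :=
  fixed_point_frechet_differentiable_general X Y hY T k hk hcontr x hxint hfix K hLip ybar hybar Tx
    V hV hVmem hTx hTxcont Ty hTy
end

section
/- Consider the 3-dimensional system $u_1' = -u_1 u_2$, $u_2' = u_1 u_2^2(1-u_2)$, $u_3' = -u_3$ restricted to $\{u_3 = 0\}$ and rewritten in the fast time: $u_1' = -u_2$, $u_2' = u_2^2(1-u_2)$. If $0 < u_2(0) < 1$ and $u_1(0) > 0$, then $u_2(0) \leq u_2(t) < 1$ for all $t \geq 0$ in the interval of existence, $u_1(t) \leq u_1(0) - u_2(0)t$, and consequently $u_1$ attains the value $0$ at some finite time $t \leq u_1(0)/u_2(0)$. -/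
/-!
The constants `0` and `1` are equilibria of the locally Lipschitz field `x ↦ x² (1 - x)`, so by
uniqueness of solutions a trajectory starting in `(0, 1)` can never reach them: `u₂` stays in
`(0, 1)`, where its derivative is nonnegative, so `u₂ ≥ u₂ 0`. Then `u₁' = -u₂ ≤ -u₂ 0`, and
`u₁` drops to zero before time `u₁ 0 / u₂ 0` by the intermediate value theorem.
-/

open Set

theorem eqOn_const_of_hasDerivAt_of_apply_eq_equilibrium {E : Type*} [NormedAddCommGroup E]
    [NormedSpace ℝ E] {f : E → E} (hf : LocallyLipschitz f) {u : ℝ → E} {a b : ℝ} {c : E}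
    (hu : ∀ t ∈ Icc a b, HasDerivAt u (f (u t)) t) (hc : f c = 0) (hb : u b = c) :
    EqOn u (fun _ ↦ c) (Icc a b) := by
  have hcont : ContinuousOn u (Icc a b) := fun t ht ↦ (hu t ht).continuousAt.continuousWithinAt
  set s := insert c (u '' Icc a b)
  obtain ⟨K, hK⟩ := hf.locallyLipschitzOn.exists_lipschitzOnWith_of_compact
    ((isCompact_Icc.image_of_continuousOn hcont).insert c)
  refine ODE_solution_unique_of_mem_Icc_left (v := fun _ ↦ f) (s := fun _ ↦ s) (fun _ _ ↦ hK)
    hcont (fun t ht ↦ (hu t (Ioc_subset_Icc_self ht)).hasDerivWithinAt)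
    (fun t ht ↦ mem_insert_of_mem _ (mem_image_of_mem _ (Ioc_subset_Icc_self ht)))
    continuousOn_const (fun t _ ↦ ?_) (fun _ _ ↦ mem_insert _ _) hb
  simpa [hc] using hasDerivWithinAt_const t (Iic t) c

theorem mem_Ioo_of_hasDerivAt_of_equilibria {f : ℝ → ℝ} (hf : LocallyLipschitz f) {u : ℝ → ℝ}
    {a b t₀ : ℝ} (hu : ∀ t ∈ Ici t₀, HasDerivAt u (f (u t)) t) (ha : f a = 0) (hb : f b = 0)
    (h₀ : u t₀ ∈ Ioo a b) {t : ℝ} (ht : t ∈ Ici t₀) : u t ∈ Ioo a b := by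
  have hcont : ContinuousOn u (Icc t₀ t) := fun s hs ↦
    (hu s hs.1).continuousAt.continuousWithinAt
  have hu' : ∀ s ∈ Icc t₀ t, ∀ r ∈ Icc t₀ s, HasDerivAt u (f (u r)) r :=
    fun s hs r hr ↦ hu r hr.1
  by_contra hout
  rcases not_and_or.mp hout with hlow | hhigh
  · obtain ⟨s, hs, hsa⟩ := intermediate_value_Icc' ht hcont ⟨not_lt.mp hlow, h₀.1.le⟩
    exact h₀.1.ne' (eqOn_const_of_hasDerivAt_of_apply_eq_equilibrium hf (hu' s hs) ha hsa
      (left_mem_Icc.2 hs.1))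
  · obtain ⟨s, hs, hsb⟩ := intermediate_value_Icc ht hcont ⟨h₀.2.le, not_lt.mp hhigh⟩
    exact h₀.2.ne (eqOn_const_of_hasDerivAt_of_apply_eq_equilibrium hf (hu' s hs) hb hsb
      (left_mem_Icc.2 hs.1))

theorem locallyLipschitz_sq_mul_one_sub : LocallyLipschitz (fun x : ℝ ↦ x ^ 2 * (1 - x)) :=
  ContDiff.locallyLipschitz (𝕂 := ℝ) (by fun_prop)

theorem exists_zero_of_le_sub_mul {u : ℝ → ℝ} {c : ℝ} (hu : ContinuousOn u (Ici 0))
    (h₀ : 0 < u 0) (hc : 0 < c) (hle : ∀ t ∈ Ici (0 : ℝ), u t ≤ u 0 - c * t) :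
    ∃ t₀, 0 ≤ t₀ ∧ t₀ ≤ u 0 / c ∧ u t₀ = 0 := by
  have hT : 0 ≤ u 0 / c := (div_pos h₀ hc).le
  have huT : u (u 0 / c) ≤ 0 := by
    simpa only [mul_div_cancel₀ _ hc.ne', sub_self] using hle _ hT
  obtain ⟨t₀, ht₀, hzero⟩ :=
    intermediate_value_Icc' hT (hu.mono Icc_subset_Ici_self) ⟨huT, h₀.le⟩
  exact ⟨t₀, ht₀.1, ht₀.2, hzero⟩

/-- Remark 4.3: for `u₁' = -u₂`, `u₂' = u₂²(1-u₂)` with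
`0 < u₂(0) < 1` and `u₁(0) > 0`, we have `u₂(0) ≤ u₂(t) < 1` and
`u₁(t) ≤ u₁(0) - u₂(0) t` for all `t ≥ 0`; consequently `u₁` vanishes at some
finite time `t₀ ≤ u₁(0)/u₂(0)`. -/
theorem remark_slow_counterexample
    (u₁ u₂ : ℝ → ℝ)
    (h10 : 0 < u₁ 0) (h20 : 0 < u₂ 0) (h20' : u₂ 0 < 1)
    (hode₁ : ∀ t ∈ Set.Ici (0:ℝ), HasDerivAt u₁ (-(u₂ t)) t)
    (hode₂ : ∀ t ∈ Set.Ici (0:ℝ), HasDerivAt u₂ ((u₂ t) ^ 2 * (1 - u₂ t)) t) :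
    (∀ t ∈ Set.Ici (0:ℝ), u₂ 0 ≤ u₂ t ∧ u₂ t < 1 ∧ u₁ t ≤ u₁ 0 - u₂ 0 * t) ∧
    ∃ t₀, 0 ≤ t₀ ∧ t₀ ≤ u₁ 0 / u₂ 0 ∧ u₁ t₀ = 0 := by
  have hu₂ : ∀ t ∈ Ici (0 : ℝ), u₂ t ∈ Ioo 0 1 := fun t ht ↦
    mem_Ioo_of_hasDerivAt_of_equilibria locallyLipschitz_sq_mul_one_sub hode₂ (by norm_num)
      (by norm_num) ⟨h20, h20'⟩ ht
  have hc₁ : ContinuousOn u₁ (Ici 0) := fun t ht ↦ (hode₁ t ht).continuousAt.continuousWithinAt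
  have hc₂ : ContinuousOn u₂ (Ici 0) := fun t ht ↦ (hode₂ t ht).continuousAt.continuousWithinAt
  have hmono : MonotoneOn u₂ (Ici 0) := by
    refine monotoneOn_of_hasDerivWithinAt_nonneg (convex_Ici 0) hc₂
      (fun t ht ↦ (hode₂ t (interior_subset ht)).hasDerivWithinAt) fun t ht ↦ ?_
    exact mul_nonneg (sq_nonneg _) (sub_nonneg.mpr (hu₂ t (interior_subset ht)).2.le)
  have hbound : ∀ t ∈ Ici (0 : ℝ), u₁ t ≤ u₁ 0 - u₂ 0 * t := fun t ht ↦ by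
    have hderiv : ∀ x ∈ interior (Ici (0 : ℝ)), deriv u₁ x ≤ -u₂ 0 := fun x hx ↦ by
      rw [(hode₁ x (interior_subset hx)).deriv, neg_le_neg_iff]
      exact hmono self_mem_Ici (interior_subset hx) (interior_subset hx)
    have hmvt := (convex_Ici 0).image_sub_le_mul_sub_of_deriv_le hc₁
      (fun x hx ↦ (hode₁ x (interior_subset hx)).differentiableAt.differentiableWithinAt)
      hderiv 0 self_mem_Ici t ht ht
    linarith
  exact ⟨fun t ht ↦ ⟨hmono self_mem_Ici ht ht, (hu₂ t ht).2, hbound t ht⟩,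
    exists_zero_of_le_sub_mul hc₁ h10 h20 hbound⟩
end
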